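/- arXiv:2402.03069 — 5 statements merged into one kernel-verified Lean document; each statement's English description precedes it below -/
import Mathlib

section
/- Ershov's recursion theorem (simple form): if γ : ℕ → S is a precomplete numbering, then for every total computable function f : ℕ → ℕ there exists e ∈ ℕ with γ(f(e)) = γ(e). -/
/-- Ershov's recursion theorem for precomplete numberings (simple form). -/
theorem ershov_recursion {S : Type*} (γ : ℕ → S) (hsurj : Function.Surjective γ)
    (hpre : ∀ ψ : ℕ →. ℕ, Partrec ψ →
      ∃ f : ℕ → ℕ, Computable f ∧ ∀ n : ℕ, ∀ y ∈ ψ n, γ (f n) = γ y)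
    (f : ℕ → ℕ) (hf : Computable f) :
    ∃ e : ℕ, γ (f e) = γ e := by
  -- diagonal partial function ψ n = eval (code n) n
  have hψ : Partrec (fun n => (Denumerable.ofNat Nat.Partrec.Code n).eval n) := by
    have := Nat.Partrec.Code.eval_part.comp
      (Computable.ofNat Nat.Partrec.Code) Computable.id
    exact this
  obtain ⟨h, hh, hfix⟩ := hpre _ hψ
  -- f ∘ h is computable, hence has a code c
  have hfh : Nat.Partrec (fun n => Part.some (f (h n))) := by
    have : Computable (fun n => f (h n)) := hf.comp hh
    exact Nat.Partrec.of_eq (Partrec.nat_iff.mp this.partrec) (fun n => rfl)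
  obtain ⟨c, hc⟩ := Nat.Partrec.Code.exists_code.mp hfh
  refine ⟨h (Encodable.encode c), ?_⟩
  have := hfix (Encodable.encode c) (f (h (Encodable.encode c)))
  rw [Denumerable.ofNat_encode, hc] at this
  exact (this (Part.mem_some _)).symm
end

section
/- Ershov's recursion theorem with parameters: if γ : ℕ → S is a precomplete numbering, then there exists a total computable function f : ℕ → ℕ such that for every n, if φ_n(f(n)) is defined, then φ_n(f(n)) ∼_γ f(n). -/
/-- The `e`-th partial computable function in a standard numbering
satisfying the S-m-n theorem. -/
def phi (e : ℕ) : ℕ →. ℕ := (Denumerable.ofNat Nat.Partrec.Code e).eval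

/-- The `e`-th computably enumerable set `W e = dom (phi e)`. -/
def W (e : ℕ) : Set ℕ := {n | (phi e n).Dom}

/-- Ershov's recursion theorem with parameters. -/
theorem ershov_recursion_with_parameters {S : Type*} (γ : ℕ → S)
    (hsurj : Function.Surjective γ)
    (hpre : ∀ ψ : ℕ →. ℕ, Partrec ψ →
      ∃ f : ℕ → ℕ, Computable f ∧ ∀ n : ℕ, ∀ y ∈ ψ n, γ (f n) = γ y) :
    ∃ f : ℕ → ℕ, Computable f ∧ ∀ n : ℕ, ∀ y ∈ phi n (f n), γ y = γ (f n) := by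
  -- diagonal partial function ψ z = phi (z.unpair.2) z
  have hψ : Partrec (fun z : ℕ => phi z.unpair.2 z) := by
    have := Nat.Partrec.Code.eval_part.comp
      ((Computable.ofNat Nat.Partrec.Code).comp
        (Computable.snd.comp Computable.unpair)) Computable.id
    exact this
  obtain ⟨t, ht, htspec⟩ := hpre _ hψ
  -- χ z = phi (z.unpair.1) (t z)
  have hχ : Partrec (fun z : ℕ => phi z.unpair.1 (t z)) := by
    have := Nat.Partrec.Code.eval_part.comp
      ((Computable.ofNat Nat.Partrec.Code).comp
        (Computable.fst.comp Computable.unpair)) ht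
    exact this
  obtain ⟨c, hc⟩ := Nat.Partrec.Code.exists_code.mp (Partrec.nat_iff.mp hχ)
  set e := Encodable.encode c with he
  refine ⟨fun n => t (Nat.pair n e), ht.comp ?_, ?_⟩
  · exact Primrec.to_comp (Primrec₂.natPair.comp Primrec.id (Primrec.const e))
  · intro n y hy
    have key : phi n (t (Nat.pair n e)) = (fun z : ℕ => phi z.unpair.2 z) (Nat.pair n e) := by
      have h1 : (fun z : ℕ => phi z.unpair.1 (t z)) (Nat.pair n e) = phi n (t (Nat.pair n e)) := by
        simp
      have h2 : phi e (Nat.pair n e) = c.eval (Nat.pair n e) := by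
        simp [phi, he]
      calc phi n (t (Nat.pair n e)) = c.eval (Nat.pair n e) := by rw [← h1, hc]
        _ = phi e (Nat.pair n e) := h2.symm
        _ = (fun z : ℕ => phi z.unpair.2 z) (Nat.pair n e) := by simp
    have hy' : y ∈ (fun z : ℕ => phi z.unpair.2 z) (Nat.pair n e) := key ▸ hy
    exact (htspec (Nat.pair n e) y hy').symm
end

section
/- The recursion theorem for precomplete generalized numberings over a pca: if A is a pca and γ : A → S is a precomplete generalized numbering, then there exists a total f ∈ A such that for all g ∈ A, if g·(f·g) is defined, then g·(f·g) ∼_γ f·g. -/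
/- A pca presented via its combinators: \`app\` is the partial application,
and \`k\`, \`s\` satisfy \`k·a·b = a\`, \`s·a↓\`, \`s·a·b↓\`, \`s·a·b·c ≃ (a·c)·(b·c)\`. -/

/-- The recursion theorem for precomplete generalized numberings over a pca. -/
theorem recursion_precomplete_generalized_numbering {α S : Type*}
    (app : α → α → Part α) (k s : α)
    (hk : ∀ a : α, ∃ ka ∈ app k a, ∀ b : α, app ka b = Part.some a)
    (hs : ∀ a : α, ∃ sa ∈ app s a, ∀ b : α, ∃ sab ∈ app sa b, ∀ c : α,
      app sab c = (app a c).bind fun x => (app b c).bind fun y => app x y)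
    (γ : α → S) (hsurj : Function.Surjective γ)
    (hpre : ∀ b : α, ∃ f : α, (∀ a : α, (app f a).Dom) ∧
      ∀ a : α, ∀ y ∈ app f a, ∀ z ∈ app b a, γ y = γ z) :
    ∃ f : α, (∀ g : α, (app f g).Dom) ∧
      ∀ g : α, ∀ y ∈ app f g, ∀ z ∈ app g y, γ z = γ y := by
  classical
  -- Extract the k-combinator function
  choose K hK1 hK2 using hk
  have hKeq : ∀ a : α, app k a = Part.some (K a) := fun a =>
    Part.eq_some_iff.2 (hK1 a)
  -- Extract the s-combinator functions
  choose S1 hS1 hS2 using hs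
  have hS1eq : ∀ a : α, app s a = Part.some (S1 a) := fun a =>
    Part.eq_some_iff.2 (hS1 a)
  choose S2 hS2a hS2b using hS2
  have hS2eq : ∀ a b : α, app (S1 a) b = Part.some (S2 a b) := fun a b =>
    Part.eq_some_iff.2 (hS2a a b)
  -- the self-application element: b = s i i with i = s k k, so that b·x = x·x
  have hb : ∀ c : α, app (S2 (S2 k k) (S2 k k)) c = app c c := by
    intro c
    simp only [hS2b, hKeq, hK2, Part.bind_some]
  -- totalize b via precompleteness
  obtain ⟨t, ht_total, ht⟩ := hpre (S2 (S2 k k) (S2 k k))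
  -- the element e_g := S2 (K g) t satisfies e_g·x = (t·x) bind (g·-)
  have he : ∀ g x : α, app (S2 (K g) t) x = (app t x).bind (app g) := by
    intro g x
    simp only [hS2b, hK2, Part.bind_some]
  -- the fixed-point finder: f = s (K t) (s (s (K s) k) (K t)), with f·g = t·e_g
  have hf : ∀ g : α,
      app (S2 (K t) (S2 (S2 (K s) k) (K t))) g = app t (S2 (K g) t) := by
    intro g
    simp only [hS2b, hKeq, hK2, hS1eq, hS2eq, Part.bind_some]
  refine ⟨S2 (K t) (S2 (S2 (K s) k) (K t)), ?_, ?_⟩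
  · intro g
    rw [hf]
    exact ht_total _
  · intro g y hy z hz
    rw [hf] at hy
    -- hy : y ∈ app t (S2 (K g) t)
    have hz' : z ∈ app (S2 (S2 k k) (S2 k k)) (S2 (K g) t) := by
      rw [hb, he, Part.eq_some_iff.2 hy, Part.bind_some]
      exact hz
    exact (ht _ y hy z hz').symm
end

section
/- For any set A ⊆ ℕ, the following are equivalent: (i) A computes a function f : ℕ → ℕ with W_{f(n)} ≠ W_n for all n; (ii) A computes a function h : ℕ → ℕ with φ_{h(e)} ≠ φ_e for all e. -/
/-- Partial functions computable relative to an oracle `O`. -/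
inductive OracleRecursiveIn (O : ℕ →. ℕ) : (ℕ →. ℕ) → Prop
  | oracle : OracleRecursiveIn O O
  | zero : OracleRecursiveIn O (pure 0)
  | succ : OracleRecursiveIn O Nat.succ
  | left : OracleRecursiveIn O ↑fun n : ℕ => n.unpair.1
  | right : OracleRecursiveIn O ↑fun n : ℕ => n.unpair.2
  | pair {f g} : OracleRecursiveIn O f → OracleRecursiveIn O g →
      OracleRecursiveIn O fun n => Nat.pair <$> f n <*> g n
  | comp {f g} : OracleRecursiveIn O f → OracleRecursiveIn O g → OracleRecursiveIn O fun n => g n >>= f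
  | prec {f g} : OracleRecursiveIn O f → OracleRecursiveIn O g → OracleRecursiveIn O (Nat.unpaired fun a n =>
      n.rec (f a) fun y IH => do let i ← IH; g (Nat.pair a (Nat.pair y i)))
  | rfind {f} : OracleRecursiveIn O f →
      OracleRecursiveIn O fun a => Nat.rfind fun n => (fun m => m = 0) <$> f (Nat.pair a n)

open scoped Classical in
/-- The characteristic function of a set, as an oracle. -/
noncomputable def charFn (A : Set ℕ) : ℕ →. ℕ := fun n => Part.some (if n ∈ A then 1 else 0)

/-- Turing reducibility for sets: `A ≤_T B`. -/
def TuringRed (A B : Set ℕ) : Prop := OracleRecursiveIn (charFn B) (charFn A)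

/-- `A` computes the total function `f`, i.e. `f ≤_T A`. -/
def FunRecIn (A : Set ℕ) (f : ℕ → ℕ) : Prop := OracleRecursiveIn (charFn A) fun n => Part.some (f n)

/-- The halting set ∅′. -/
def Khalt : Set ℕ := {n | (phi n n).Dom}

/-! An FPF function is in particular DNC on indices, since equal functions have equal domains.
Conversely, transport along the graph coding: there are computable `σ`, `τ` with
`W (σ e) = {⟨x, y⟩ | y ∈ φ_e x}` and `φ_(τ n) = g` whenever `W n` is the coded graph of `g`.
If `h` is DNC, then `σ ∘ h ∘ τ` is FPF: `W (σ (h (τ n))) = W n` would make `W n` the graph of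
`φ_(h (τ n))`, hence `φ_(τ n) = φ_(h (τ n))`. -/

open Nat.Partrec (Code)
open Nat.Partrec.Code

theorem OracleRecursiveIn.of_partrec {O f : ℕ →. ℕ} (hf : Nat.Partrec f) :
    OracleRecursiveIn O f := by
  induction hf with
  | zero => exact .zero
  | succ => exact .succ
  | left => exact .left
  | right => exact .right
  | pair _ _ ih₁ ih₂ => exact .pair ih₁ ih₂
  | comp _ _ ih₁ ih₂ => exact .comp ih₁ ih₂
  | prec _ _ ih₁ ih₂ => exact .prec ih₁ ih₂
  | rfind _ ih => exact .rfind ih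

theorem FunRecIn.of_computable {A : Set ℕ} {f : ℕ → ℕ} (hf : Computable f) : FunRecIn A f :=
  .of_partrec (Partrec.nat_iff.1 hf)

theorem FunRecIn.comp {A : Set ℕ} {g f : ℕ → ℕ} (hg : FunRecIn A g) (hf : FunRecIn A f) :
    FunRecIn A (g ∘ f) := by
  simpa only [FunRecIn, Function.comp_apply, Part.bind_eq_bind, Part.bind_some]
    using OracleRecursiveIn.comp hg hf

theorem Nat.rfindOpt_eq_of_forall_exists_mem_iff {α : Type*} {f : ℕ → Option α} {p : Part α}
    (h : ∀ a, (∃ n, a ∈ f n) ↔ a ∈ p) : Nat.rfindOpt f = p := by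
  refine Part.ext fun a => ⟨fun ha => (h a).1 (Nat.rfindOpt_spec ha), fun ha => ?_⟩
  obtain ⟨n, hn⟩ := (h a).2 ha
  obtain ⟨b, hb⟩ := Part.dom_iff_mem.1 (Nat.rfindOpt_dom.2 ⟨n, a, hn⟩)
  obtain rfl := Part.mem_unique ha ((h b).1 (Nat.rfindOpt_spec hb))
  exact hb

theorem partrec₂_phi : Partrec₂ phi :=
  eval_part.comp ((Computable.ofNat Code).comp .fst) .snd

theorem mem_W_iff_exists_evaln {n q : ℕ} :
    q ∈ W n ↔ ∃ k z, z ∈ evaln k (Denumerable.ofNat Code n) q := by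
  simp only [W, Set.mem_ofPred_eq, Part.dom_iff_mem, phi, evaln_complete]
  exact exists_comm

/-- The s-m-n theorem, with indices in place of codes. -/
theorem exists_computable_phi_eq {g : ℕ → ℕ →. ℕ} (hg : Partrec₂ g) :
    ∃ s : ℕ → ℕ, Computable s ∧ ∀ e, phi (s e) = g e := by
  obtain ⟨c, hc⟩ := exists_code.1 (Partrec₂.unpaired'.2 hg)
  refine ⟨fun e => Encodable.encode (curry c e),
    (Primrec.encode.comp (primrec₂_curry.comp (.const c) .id)).to_comp, fun e => ?_⟩
  funext x
  simp [phi, eval_curry, hc]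

def codedGraph (g : ℕ →. ℕ) : Set ℕ := {q | q.unpair.2 ∈ g q.unpair.1}

theorem exists_computable_W_eq_codedGraph :
    ∃ σ : ℕ → ℕ, Computable σ ∧ ∀ e, W (σ e) = codedGraph (phi e) := by
  let g : ℕ → ℕ →. ℕ := fun e q =>
    (phi e q.unpair.1).bind fun y => cond (q.unpair.2 == y) (Part.some 0) Part.none
  have hg : Partrec₂ g :=
    (partrec₂_phi.comp .fst (Computable.fst.comp (Computable.unpair.comp .snd))).bind <|
      Partrec.cond
        (Primrec.beq.comp (Primrec.snd.comp (Primrec.unpair.comp (Primrec.snd.comp .fst)))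
          .snd).to_comp
        (Partrec.const' (Part.some 0)) Partrec.none
  obtain ⟨σ, hσ, hphi⟩ := exists_computable_phi_eq hg
  refine ⟨σ, hσ, fun e => Set.ext fun q => ?_⟩
  simp only [W, codedGraph, Set.mem_ofPred_eq, hphi, g, Part.dom_iff_mem, Part.mem_bind_iff]
  constructor
  · rintro ⟨z, y, hy, hz⟩
    cases hq : q.unpair.2 == y <;> simp_all
  · exact fun hq => ⟨0, _, hq, by simp⟩

/-- A hit at `m = ⟨y, k⟩` means that `⟨x, y⟩` is enumerated into `W n` within `k` steps. -/
def graphSearch (n x m : ℕ) : Option ℕ :=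
  (evaln m.unpair.2 (Denumerable.ofNat Code n) (Nat.pair x m.unpair.1)).map fun _ => m.unpair.1

theorem primrec_graphSearch :
    Primrec fun p : (ℕ × ℕ) × ℕ => graphSearch p.1.1 p.1.2 p.2 := by
  refine Primrec.option_map ?_ (Primrec.fst.comp (Primrec.unpair.comp (Primrec.snd.comp .fst))).to₂
  exact primrec_evaln.comp <|
    ((Primrec.snd.comp (Primrec.unpair.comp .snd)).pair
      ((Primrec.ofNat Code).comp (Primrec.fst.comp .fst))).pair
    (Primrec₂.natPair.comp (Primrec.snd.comp .fst) (Primrec.fst.comp (Primrec.unpair.comp .snd)))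

theorem exists_mem_graphSearch_iff {n x y : ℕ} :
    (∃ m, y ∈ graphSearch n x m) ↔ Nat.pair x y ∈ W n := by
  rw [mem_W_iff_exists_evaln]
  constructor
  · rintro ⟨m, hm⟩
    obtain ⟨z, hz, rfl⟩ := Option.map_eq_some_iff.1 hm
    exact ⟨_, z, hz⟩
  · rintro ⟨k, z, hz⟩
    exact ⟨Nat.pair y k, by simp [graphSearch, Option.mem_def.1 hz]⟩

theorem exists_computable_phi_eq_of_W_eq_codedGraph :
    ∃ τ : ℕ → ℕ, Computable τ ∧ ∀ n g, W n = codedGraph g → phi (τ n) = g := by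
  obtain ⟨τ, hτ, hphi⟩ := exists_computable_phi_eq (g := fun n x => Nat.rfindOpt (graphSearch n x))
    (Partrec.rfindOpt primrec_graphSearch.to_comp)
  refine ⟨τ, hτ, fun n g hW => funext fun x => ?_⟩
  rw [hphi]
  refine Nat.rfindOpt_eq_of_forall_exists_mem_iff fun y => ?_
  rw [exists_mem_graphSearch_iff, hW]
  simp only [codedGraph, Set.mem_ofPred_eq, Nat.unpair_pair]

/-- Equivalence of computing an FPF function and computing an index-level DNC function. -/
theorem fpf_equiv (A : Set ℕ) :
    (∃ f : ℕ → ℕ, FunRecIn A f ∧ ∀ n : ℕ, W (f n) ≠ W n) ↔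
    (∃ h : ℕ → ℕ, FunRecIn A h ∧ ∀ e : ℕ, phi (h e) ≠ phi e) := by
  constructor
  · rintro ⟨f, hf, hfpf⟩
    exact ⟨f, hf, fun e he => hfpf e (by simp only [W, he])⟩
  · rintro ⟨h, hh, hdnc⟩
    obtain ⟨σ, hσ, hWσ⟩ := exists_computable_W_eq_codedGraph
    obtain ⟨τ, hτ, hphiτ⟩ := exists_computable_phi_eq_of_W_eq_codedGraph
    refine ⟨σ ∘ h ∘ τ, (FunRecIn.of_computable hσ).comp (hh.comp (.of_computable hτ)),
      fun n hn => hdnc (τ n) ?_⟩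
    exact (hphiτ n _ (hn.symm.trans (hWσ _))).symm
end

section
/- Arslanov's completeness criterion: if A is a computably enumerable set with A <_T ∅' (A is Turing incomplete), then every A-computable total function f : ℕ → ℕ has a fixed point, i.e. there exists e with W_{f(e)} = W_e. -/
/-!
Since `A` is c.e. and `f ≤_T A`, `f` is the limit of primitive recursive guesses `f_s` with an
`A`-computable modulus of convergence. This follows by induction on the oracle computation; for the
oracle itself, `n ∈ A` is guessed correctly from the stage at which `n` is enumerated into `A` on,
and `A` can compute that stage.

By the recursion theorem with parameters there is a computable `i` such that `φ_{i(x)}` waits for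
`x` to enter `∅'`, at stage `s` say, and then copies `φ_{f_s(i(x))}`. If `f` has no fixed point,
`x` cannot enter `∅'` after the modulus `m` at `i(x)`, for then `φ_{i(x)} = φ_{f(i(x))}`. Hence
`x ∈ ∅'` iff `x` has entered `∅'` by stage `m`, and `∅' ≤_T A`.
-/

open Nat.Partrec (Code)
open Nat.Partrec.Code

namespace OracleRecursiveIn

variable {O f g : ℕ →. ℕ}

theorem of_eq (hf : OracleRecursiveIn O f) (h : ∀ n, f n = g n) : OracleRecursiveIn O g :=
  funext h ▸ hf

theorem of_nat_partrec (hf : Nat.Partrec f) : OracleRecursiveIn O f := by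
  induction hf with
  | zero => exact .zero
  | succ => exact .succ
  | left => exact .left
  | right => exact .right
  | pair _ _ ihf ihg => exact .pair ihf ihg
  | comp _ _ ihf ihg => exact .comp ihf ihg
  | prec _ _ ihf ihg => exact .prec ihf ihg
  | rfind _ ihf => exact .rfind ihf

theorem of_computable {p : ℕ → ℕ} (hp : Computable p) :
    OracleRecursiveIn O fun n => Part.some (p n) :=
  of_nat_partrec (Partrec.nat_iff.1 hp)

theorem precomp (hf : OracleRecursiveIn O f) {p : ℕ → ℕ} (hp : Computable p) :
    OracleRecursiveIn O fun n => f (p n) :=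
  (hf.comp (of_computable hp)).of_eq fun n => Part.bind_some (p n) f

theorem bind (hf : OracleRecursiveIn O f) (hg : OracleRecursiveIn O g) {p : ℕ → ℕ → ℕ}
    (hp : Computable₂ p) : OracleRecursiveIn O fun n => (f n).bind fun a => g (p n a) := by
  refine ((hg.precomp (hp.comp (Computable.fst.comp Computable.unpair)
    (Computable.snd.comp Computable.unpair))).comp
    ((of_computable Computable.id).pair hf)).of_eq fun n => ?_
  simp [Seq.seq]

theorem map (hf : OracleRecursiveIn O f) {p : ℕ → ℕ → ℕ} (hp : Computable₂ p) :
    OracleRecursiveIn O fun n => (f n).map (p n) :=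
  (hf.bind (of_computable Computable.id) hp).of_eq fun _ => Part.bind_some_eq_map _ _

theorem map₂ (hf : OracleRecursiveIn O f) (hg : OracleRecursiveIn O g) {p : ℕ → ℕ → ℕ}
    (hp : Computable₂ p) : OracleRecursiveIn O fun n => (f n).bind fun a => (g n).map (p a) := by
  refine ((of_computable (hp.comp (Computable.fst.comp Computable.unpair)
    (Computable.snd.comp Computable.unpair))).comp (hf.pair hg)).of_eq fun n => ?_
  simp [Seq.seq, Part.bind_some_eq_map, Part.map_map, Function.comp_def]

theorem of_rec {F : ℕ → ℕ → Part ℕ} (hf : OracleRecursiveIn O f) (hg : OracleRecursiveIn O g)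
    (h0 : ∀ a, F a 0 = f a)
    (hsucc : ∀ a n, F a (n + 1) = (F a n).bind fun i => g (Nat.pair a (Nat.pair n i))) :
    OracleRecursiveIn O (Nat.unpaired F) := by
  refine (hf.prec hg).of_eq fun p => ?_
  simp only [Nat.unpaired]
  induction p.unpair.2 with
  | zero => exact (h0 _).symm
  | succ n ih => rw [hsucc, ← ih]; rfl

end OracleRecursiveIn

def stageW (e s n : ℕ) : Bool := (evaln s (Denumerable.ofNat Code e) n).isSome

theorem stageW_mono {e s t n : ℕ} (hst : s ≤ t) (hs : stageW e s n = true) :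
    stageW e t n = true := by
  obtain ⟨v, hv⟩ := Option.isSome_iff_exists.1 hs
  exact Option.isSome_iff_exists.2 ⟨v, evaln_mono hst hv⟩

theorem mem_W_iff_exists_stageW {e n : ℕ} : n ∈ W e ↔ ∃ s, stageW e s n = true := by
  simp only [W, phi, stageW, Set.mem_ofPred_eq, Part.dom_iff_mem, evaln_complete,
    Option.isSome_iff_exists]
  exact ⟨fun ⟨v, s, hs⟩ => ⟨s, v, hs⟩, fun ⟨s, v, hs⟩ => ⟨v, s, hs⟩⟩

theorem primrec_stageW : Primrec fun x : ℕ × ℕ × ℕ => stageW x.1 x.2.1 x.2.2 :=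
  Primrec.option_isSome.comp (primrec_evaln.comp
    ((Primrec.fst.comp Primrec.snd).pair ((Primrec.ofNat Code).comp Primrec.fst) |>.pair
      (Primrec.snd.comp Primrec.snd)))

def precApprox (Hf Hg : ℕ → ℕ → Option ℕ) (s p : ℕ) : Option ℕ :=
  p.unpair.2.rec (Hf s p.unpair.1) fun y IH =>
    IH.bind fun i => Hg s (Nat.pair p.unpair.1 (Nat.pair y i))

theorem primrec₂_precApprox {Hf Hg : ℕ → ℕ → Option ℕ} (hf : Primrec₂ Hf) (hg : Primrec₂ Hg) :
    Primrec₂ (precApprox Hf Hg) := by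
  have a : Primrec fun p : ℕ × ℕ => p.2.unpair.1 :=
    Primrec.fst.comp (Primrec.unpair.comp Primrec.snd)
  have n : Primrec fun p : ℕ × ℕ => p.2.unpair.2 :=
    Primrec.snd.comp (Primrec.unpair.comp Primrec.snd)
  exact Primrec.nat_rec' n (hf.comp Primrec.fst a)
    (Primrec.option_bind (Primrec.snd.comp Primrec.snd)
      (hg.comp (Primrec.fst.comp (Primrec.fst.comp Primrec.fst))
        (Primrec₂.natPair.comp (a.comp (Primrec.fst.comp Primrec.fst))
          (Primrec₂.natPair.comp (Primrec.fst.comp (Primrec.snd.comp Primrec.fst))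
            Primrec.snd))).to₂).to₂

/-- The stage-`s` guess for `μ n, f (a, n) = 0` from stage-`s` guesses `Hf s` for `f`: the first
`n ≤ s` whose guess is not a positive value, provided that guess is `0`. -/
def rfindApprox (Hf : ℕ → ℕ → Option ℕ) (s a : ℕ) : Option ℕ :=
  let y := (List.range (s + 1)).findIdx fun n => (Hf s (Nat.pair a n)).getD 0 == 0
  if Hf s (Nat.pair a y) = some 0 then some y else none

theorem primrec₂_rfindApprox {Hf : ℕ → ℕ → Option ℕ} (hf : Primrec₂ Hf) :
    Primrec₂ (rfindApprox Hf) := by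
  have hy : Primrec fun p : ℕ × ℕ =>
      (List.range (p.1 + 1)).findIdx fun n => (Hf p.1 (Nat.pair p.2 n)).getD 0 == 0 :=
    Primrec.list_findIdx (Primrec.list_range.comp (Primrec.succ.comp Primrec.fst))
      (Primrec.beq.comp (Primrec.option_getD.comp
        (hf.comp (Primrec.fst.comp Primrec.fst)
          (Primrec₂.natPair.comp (Primrec.snd.comp Primrec.fst) Primrec.snd))
        (Primrec.const 0)) (Primrec.const 0)).to₂
  have hval : Primrec fun p : ℕ × ℕ => Hf p.1 (Nat.pair p.2 ((List.range (p.1 + 1)).findIdx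
      fun n => (Hf p.1 (Nat.pair p.2 n)).getD 0 == 0)) :=
    hf.comp Primrec.fst (Primrec₂.natPair.comp Primrec.snd hy)
  exact (Primrec.ite (Primrec.eq.comp hval (Primrec.const (some 0)))
    (Primrec.option_some.comp hy) (Primrec.const none)).to₂

theorem rfindApprox_eq_some {Hf : ℕ → ℕ → Option ℕ} {s a y : ℕ} (hys : y ≤ s)
    (hy : Hf s (Nat.pair a y) = some 0)
    (hlt : ∀ n < y, ∃ v ≠ 0, Hf s (Nat.pair a n) = some v) :
    rfindApprox Hf s a = some y := by
  have hfind : ((List.range (s + 1)).findIdx fun n => (Hf s (Nat.pair a n)).getD 0 == 0) = y := by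
    rw [List.findIdx_eq (by simpa using Nat.lt_succ_of_le hys)]
    refine ⟨by simp [hy], fun n hn => ?_⟩
    obtain ⟨v, hv0, hv⟩ := hlt n hn
    simp [hv, hv0]
  simp only [rfindApprox, hfind, hy, if_true]

/-- The modulus at `(a, n)` of the primitive recursion `h` whose base and step functions have
moduli `Mf` and `Mg`. -/
def precModulus (h Mf Mg : ℕ →. ℕ) (a : ℕ) : ℕ → Part ℕ
  | 0 => Mf a
  | n + 1 => (precModulus h Mf Mg a n).bind fun m =>
    (h (Nat.pair a n)).bind fun i => (Mg (Nat.pair a (Nat.pair n i))).map (max m)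

theorem OracleRecursiveIn.precModulus {O h Mf Mg : ℕ →. ℕ} (hh : OracleRecursiveIn O h)
    (hMf : OracleRecursiveIn O Mf) (hMg : OracleRecursiveIn O Mg) :
    OracleRecursiveIn O (Nat.unpaired (precModulus h Mf Mg)) := by
  have u₁ : Primrec fun q : ℕ => q.unpair.1 := Primrec.fst.comp Primrec.unpair
  have u₂ : Primrec fun q : ℕ => q.unpair.2 := Primrec.snd.comp Primrec.unpair
  have hG : OracleRecursiveIn O fun t => (Mg t.unpair.1).map (max t.unpair.2) :=
    (hMg.precomp u₁.to_comp).map (Primrec.nat_max.comp (u₂.comp Primrec.fst) Primrec.snd).to_comp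
  have hp : Computable₂ fun q i : ℕ => Nat.pair
      (Nat.pair q.unpair.1 (Nat.pair q.unpair.2.unpair.1 i)) q.unpair.2.unpair.2 :=
    (Primrec₂.natPair.comp (Primrec₂.natPair.comp (u₁.comp Primrec.fst)
      (Primrec₂.natPair.comp ((u₁.comp u₂).comp Primrec.fst) Primrec.snd))
      ((u₂.comp u₂).comp Primrec.fst)).to_comp
  have hsucc := (hh.precomp (Primrec₂.natPair.comp u₁ (u₁.comp u₂)).to_comp).bind hG hp
  exact hMf.of_rec hsucc (fun _ => rfl) fun a n => by simp [_root_.precModulus]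

def runningMax (M : ℕ →. ℕ) (a : ℕ) : ℕ → Part ℕ
  | 0 => M (Nat.pair a 0)
  | y + 1 => (runningMax M a y).bind fun m => (M (Nat.pair a (y + 1))).map (max m)

theorem OracleRecursiveIn.runningMax {O M : ℕ →. ℕ} (hM : OracleRecursiveIn O M) :
    OracleRecursiveIn O (Nat.unpaired (runningMax M)) := by
  have u₁ : Primrec fun q : ℕ => q.unpair.1 := Primrec.fst.comp Primrec.unpair
  have u₂ : Primrec fun q : ℕ => q.unpair.2 := Primrec.snd.comp Primrec.unpair
  have h₀ : OracleRecursiveIn O fun a => M (Nat.pair a 0) :=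
    hM.precomp (Primrec₂.natPair.comp Primrec.id (Primrec.const 0)).to_comp
  have hsucc : OracleRecursiveIn O fun q =>
      (M (Nat.pair q.unpair.1 (q.unpair.2.unpair.1 + 1))).map (max q.unpair.2.unpair.2) :=
    (hM.precomp (Primrec₂.natPair.comp u₁ (Primrec.succ.comp (u₁.comp u₂))).to_comp).map
      (Primrec.nat_max.comp ((u₂.comp u₂).comp Primrec.fst) Primrec.snd).to_comp
  exact h₀.of_rec hsucc (fun _ => rfl) fun a n => by simp [_root_.runningMax]

theorem exists_mem_runningMax {M : ℕ →. ℕ} {a y : ℕ} (h : ∀ n ≤ y, (M (Nat.pair a n)).Dom) :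
    ∃ m ∈ runningMax M a y, ∀ n ≤ y, ∀ k ∈ M (Nat.pair a n), k ≤ m := by
  induction y with
  | zero =>
    refine ⟨_, Part.get_mem (h 0 le_rfl), fun n hn k hk => ?_⟩
    obtain rfl := Nat.le_zero.1 hn
    exact (Part.mem_unique hk (Part.get_mem _)).le
  | succ y ih =>
    obtain ⟨m, hm, hle⟩ := ih fun n hn => h n (Nat.le_succ_of_le hn)
    have hlast := Part.get_mem (h (y + 1) le_rfl)
    refine ⟨_, Part.mem_bind_iff.2 ⟨m, hm, Part.mem_map _ hlast⟩, fun n hn k hk => ?_⟩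
    rcases Nat.lt_succ_iff_lt_or_eq.1 (Nat.lt_succ_of_le hn) with hn | rfl
    · exact le_max_of_le_left (hle n (Nat.lt_succ_iff.1 hn) k hk)
    · exact le_max_of_le_right (Part.mem_unique hk hlast).le


/-- `H s` is the stage-`s` guess at `h`, and `M` an `O`-computable modulus of its convergence. -/
def LimitWithModulusIn (O h : ℕ →. ℕ) : Prop :=
  ∃ H : ℕ → ℕ → Option ℕ, Primrec₂ H ∧ ∃ M : ℕ →. ℕ, OracleRecursiveIn O M ∧
    ∀ n, ∀ y ∈ h n, ∃ m ∈ M n, ∀ s, m ≤ s → H s n = some y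

namespace LimitWithModulusIn

variable {O f g : ℕ →. ℕ}

theorem of_primrec {p : ℕ → ℕ} (hp : Primrec p) : LimitWithModulusIn O fun n => Part.some (p n) :=
  ⟨fun _ n => some (p n), (Primrec.option_some.comp (hp.comp Primrec.snd)).to₂,
    fun _ => Part.some 0, .of_computable (Computable.const 0), fun n y hy =>
      ⟨0, Part.mem_some 0, fun _ _ => by rw [Part.mem_some_iff.1 hy]⟩⟩

theorem pair (hf : LimitWithModulusIn O f) (hg : LimitWithModulusIn O g) :
    LimitWithModulusIn O fun n => Nat.pair <$> f n <*> g n := by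
  obtain ⟨Hf, hHf, Mf, hMf, modf⟩ := hf
  obtain ⟨Hg, hHg, Mg, hMg, modg⟩ := hg
  refine ⟨fun s n => (Hf s n).bind fun a => (Hg s n).map (Nat.pair a), ?_,
    fun n => (Mf n).bind fun a => (Mg n).map (max a), hMf.map₂ hMg Primrec.nat_max.to_comp, ?_⟩
  · exact (Primrec.option_bind (hHf.comp Primrec.fst Primrec.snd)
      (Primrec.option_map (hHg.comp (Primrec.fst.comp Primrec.fst) (Primrec.snd.comp Primrec.fst))
        (Primrec₂.natPair.comp (Primrec.snd.comp Primrec.fst) Primrec.snd).to₂).to₂).to₂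
  · intro n y hy
    simp only [Seq.seq, Part.map_eq_map, Part.mem_bind_iff, Part.mem_map_iff] at hy
    obtain ⟨_, ⟨a, ha, rfl⟩, b, hb, rfl⟩ := hy
    obtain ⟨mf, hmf, hf⟩ := modf n a ha
    obtain ⟨mg, hmg, hg⟩ := modg n b hb
    refine ⟨max mf mg, Part.mem_bind_iff.2 ⟨mf, hmf, Part.mem_map _ hmg⟩, fun s hs => ?_⟩
    simp [hf s (le_of_max_le_left hs), hg s (le_of_max_le_right hs)]

theorem comp (hf : LimitWithModulusIn O f) (hg : LimitWithModulusIn O g)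
    (hg' : OracleRecursiveIn O g) : LimitWithModulusIn O fun n => g n >>= f := by
  obtain ⟨Hf, hHf, Mf, hMf, modf⟩ := hf
  obtain ⟨Hg, hHg, Mg, hMg, modg⟩ := hg
  refine ⟨fun s n => (Hg s n).bind (Hf s), ?_,
    fun n => (Mg n).bind fun a => (g n >>= Mf).map (max a), hMg.map₂ (hMf.comp hg')
      Primrec.nat_max.to_comp, ?_⟩
  · exact (Primrec.option_bind (hHg.comp Primrec.fst Primrec.snd)
      (hHf.comp (Primrec.fst.comp Primrec.fst) Primrec.snd).to₂).to₂
  · intro n y hy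
    obtain ⟨z, hz, hy⟩ := Part.mem_bind_iff.1 hy
    obtain ⟨mg, hmg, hg⟩ := modg n z hz
    obtain ⟨mf, hmf, hf⟩ := modf z y hy
    refine ⟨max mg mf, Part.mem_bind_iff.2 ⟨mg, hmg, Part.mem_map _ ?_⟩, fun s hs => ?_⟩
    · exact Part.mem_bind_iff.2 ⟨z, hz, hmf⟩
    · simp [hg s (le_of_max_le_left hs), hf s (le_of_max_le_right hs)]

theorem prec (hf : LimitWithModulusIn O f) (hg : LimitWithModulusIn O g)
    (hf' : OracleRecursiveIn O f) (hg' : OracleRecursiveIn O g) :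
    LimitWithModulusIn O (Nat.unpaired fun a n =>
      n.rec (f a) fun y IH => do let i ← IH; g (Nat.pair a (Nat.pair y i))) := by
  obtain ⟨Hf, hHf, Mf, hMf, modf⟩ := hf
  obtain ⟨Hg, hHg, Mg, hMg, modg⟩ := hg
  set h : ℕ →. ℕ := Nat.unpaired fun a n =>
    n.rec (f a) fun y IH => do let i ← IH; g (Nat.pair a (Nat.pair y i))
  refine ⟨precApprox Hf Hg, primrec₂_precApprox hHf hHg, Nat.unpaired (precModulus h Mf Mg),
    (hf'.prec hg').precModulus hMf hMg, ?_⟩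
  suffices ∀ a n, ∀ y ∈ h (Nat.pair a n), ∃ m ∈ precModulus h Mf Mg a n, ∀ s, m ≤ s →
      precApprox Hf Hg s (Nat.pair a n) = some y by
    intro p y hy
    rw [← Nat.pair_unpair p] at hy ⊢
    simpa [Nat.unpaired] using this _ _ y hy
  intro a n
  induction n with
  | zero =>
    intro y hy
    simpa [h, precModulus, precApprox] using modf a y (by simpa [h] using hy)
  | succ n ih =>
    intro y hy
    obtain ⟨i, hi, hy⟩ := Part.mem_bind_iff.1 (by simpa [h] using hy)
    obtain ⟨m, hm, hHm⟩ := ih i (by simpa [h] using hi)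
    obtain ⟨mg, hmg, hHg⟩ := modg _ y hy
    refine ⟨max m mg, Part.mem_bind_iff.2 ⟨m, hm, ?_⟩, fun s hs => ?_⟩
    · exact Part.mem_bind_iff.2 ⟨i, by simpa [h] using hi, Part.mem_map _ hmg⟩
    · have := hHm s (le_of_max_le_left hs)
      simp only [precApprox, Nat.unpair_pair] at this ⊢
      rw [this]
      exact hHg s (le_of_max_le_right hs)

theorem rfind (hf : LimitWithModulusIn O f) (hf' : OracleRecursiveIn O f) :
    LimitWithModulusIn O fun a => Nat.rfind fun n => (fun m => m = 0) <$> f (Nat.pair a n) := by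
  obtain ⟨Hf, hHf, Mf, hMf, modf⟩ := hf
  set h : ℕ →. ℕ := fun a => Nat.rfind fun n => (fun m => m = 0) <$> f (Nat.pair a n)
  have hG : OracleRecursiveIn O fun t => (Nat.unpaired (runningMax Mf) t).map (max t.unpair.2) :=
    hMf.runningMax.map (Primrec.nat_max.comp (Primrec.snd.comp (Primrec.unpair.comp Primrec.fst))
      Primrec.snd).to_comp
  refine ⟨rfindApprox Hf, primrec₂_rfindApprox hHf,
    fun a => (h a).bind fun y => (runningMax Mf a y).map (max y),
    ((OracleRecursiveIn.rfind hf').bind hG Primrec₂.natPair.to_comp).of_eq fun a => by simp [h], ?_⟩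
  intro a y hy
  obtain ⟨hy0, hlt⟩ := Nat.mem_rfind.1 hy
  have hval : ∀ n ≤ y, ∃ v, (v = 0 ↔ n = y) ∧
      ∃ k ∈ Mf (Nat.pair a n), ∀ s, k ≤ s → Hf s (Nat.pair a n) = some v := by
    intro n hn
    rcases lt_or_eq_of_le hn with hn | rfl
    · obtain ⟨v, hv, hv0⟩ := Part.mem_map_iff _ |>.1 (hlt hn)
      exact ⟨v, by simpa [hn.ne] using hv0, modf _ v hv⟩
    · obtain ⟨v, hv, hv0⟩ := Part.mem_map_iff _ |>.1 hy0
      exact ⟨v, by simpa using hv0, modf _ v hv⟩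
  obtain ⟨m, hm, hle⟩ := exists_mem_runningMax (M := Mf) (a := a) (y := y) fun n hn =>
    let ⟨_, _, _, hk, _⟩ := hval n hn; Part.dom_iff_mem.2 ⟨_, hk⟩
  refine ⟨max y m, Part.mem_bind_iff.2 ⟨y, hy, Part.mem_map _ hm⟩, fun s hs => ?_⟩
  have hHs : ∀ n ≤ y, ∃ v, (v = 0 ↔ n = y) ∧ Hf s (Nat.pair a n) = some v := fun n hn =>
    let ⟨v, hv0, k, hk, hH⟩ := hval n hn
    ⟨v, hv0, hH s ((hle n hn k hk).trans (le_of_max_le_right hs))⟩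
  refine rfindApprox_eq_some (le_of_max_le_left hs) ?_ fun n hn => ?_
  · obtain ⟨v, hv0, hv⟩ := hHs y le_rfl
    rwa [hv0.2 rfl] at hv
  · obtain ⟨v, hv0, hv⟩ := hHs n hn.le
    exact ⟨v, fun h0 => hn.ne (hv0.1 h0), hv⟩

end LimitWithModulusIn

theorem limitWithModulusIn_charFn_W (e : ℕ) :
    LimitWithModulusIn (charFn (W e)) (charFn (W e)) := by
  have hstage : Primrec₂ fun s n => stageW e s n :=
    primrec_stageW.comp (Primrec.const e |>.pair (Primrec.fst.pair Primrec.snd))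
  -- a member of `W e` waits for the stage at which it is enumerated, a non-member for nothing
  let wait : ℕ → ℕ → ℕ → Bool := fun b n s => b == 0 || stageW e s n
  have hwait : OracleRecursiveIn (charFn (W e)) fun t =>
      Nat.rfind fun s => Part.some (wait t.unpair.2 t.unpair.1 s) := by
    refine .of_nat_partrec (Partrec.nat_iff.1 (Partrec.rfind ?_))
    have hwait : Primrec₂ fun t s : ℕ => wait t.unpair.2 t.unpair.1 s :=
      Primrec.or.comp (Primrec.beq.comp (Primrec.snd.comp (Primrec.unpair.comp Primrec.fst))
        (Primrec.const 0))
        (hstage.comp Primrec.snd (Primrec.fst.comp (Primrec.unpair.comp Primrec.fst)))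
    exact hwait.to_comp.partrec₂
  refine ⟨fun s n => some (bif stageW e s n then 1 else 0), ?_,
    fun n => (charFn (W e) n).bind fun b => Nat.rfind fun s => Part.some (wait b n s), ?_, ?_⟩
  · exact (Primrec.option_some.comp (Primrec.cond hstage (Primrec.const 1) (Primrec.const 0))).to₂
  · exact (OracleRecursiveIn.oracle.bind hwait Primrec₂.natPair.to_comp).of_eq
      fun n => by simp only [Nat.unpair_pair]
  intro n y hy
  simp only [charFn, Part.mem_some_iff] at hy
  subst hy
  by_cases hn : n ∈ W e
  · obtain ⟨s₀, hs₀⟩ := mem_W_iff_exists_stageW.1 hn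
    obtain ⟨m, hm, -⟩ := Nat.rfind_min' (p := wait 1 n) (by simpa [wait] using hs₀)
    have hm' : stageW e m n = true := by simpa [wait] using Nat.rfind_spec hm
    refine ⟨m, Part.mem_bind_iff.2 ⟨1, by simp [charFn, hn], hm⟩, fun s hs => ?_⟩
    simp [hn, stageW_mono hs hm']
  · have hstage : ∀ s, stageW e s n = false := fun s => by
      simpa using mt (fun h => mem_W_iff_exists_stageW.2 ⟨s, h⟩) hn
    obtain ⟨m, hm, hm0⟩ := Nat.rfind_min' (p := wait 0 n) (m := 0) (by simp [wait])
    refine ⟨m, Part.mem_bind_iff.2 ⟨0, by simp [charFn, hn], hm⟩, fun s _ => ?_⟩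
    simp [hn, hstage s]

theorem OracleRecursiveIn.limitWithModulusIn {O h : ℕ →. ℕ} (hh : OracleRecursiveIn O h)
    (hO : LimitWithModulusIn O O) : LimitWithModulusIn O h := by
  induction hh with
  | oracle => exact hO
  | zero => exact .of_primrec (Primrec.const 0)
  | succ => exact .of_primrec Primrec.succ
  | left => exact .of_primrec (Primrec.fst.comp Primrec.unpair)
  | right => exact .of_primrec (Primrec.snd.comp Primrec.unpair)
  | pair _ _ ihf ihg => exact ihf.pair ihg
  | comp _ hg ihf ihg => exact ihf.comp ihg hg
  | prec hf hg ihf ihg => exact ihf.prec ihg hf hg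
  | rfind hf ihf => exact ihf.rfind hf

theorem exists_computable_phi_eq_s11 {F : ℕ → ℕ → ℕ →. ℕ}
    (hF : Partrec fun p : ℕ × ℕ × ℕ => F p.1 p.2.1 p.2.2) :
    ∃ i : ℕ → ℕ, Computable i ∧ ∀ x, phi (i x) = F (i x) x := by
  obtain ⟨c, hc⟩ := fixed_point₂ (f := fun c n => F (Encodable.encode (curry c n.unpair.1))
    n.unpair.1 n.unpair.2) <| hF.comp <|
      have u₁ : Primrec fun p : Code × ℕ => p.2.unpair.1 :=
        Primrec.fst.comp (Primrec.unpair.comp Primrec.snd)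
      (Primrec.encode.comp (primrec₂_curry.comp Primrec.fst u₁) |>.pair
        (u₁.pair (Primrec.snd.comp (Primrec.unpair.comp Primrec.snd)))).to_comp
  refine ⟨fun x => Encodable.encode (curry c x),
    (Primrec.encode.comp (primrec₂_curry.comp (Primrec.const c) Primrec.id)).to_comp,
    fun x => funext fun m => ?_⟩
  simp [phi, eval_curry, hc]

theorem mem_Khalt_iff_stageW {H : ℕ → ℕ → Option ℕ} {f : ℕ → ℕ} {j x m : ℕ}
    (hj : ∀ n, phi j n =
      (Nat.rfind fun s => Part.some (stageW x s x)).bind fun s => phi ((H s j).getD 0) n)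
    (hfix : W (f j) ≠ W j) (hm : ∀ s, m ≤ s → H s j = some (f j)) :
    x ∈ Khalt ↔ stageW x m x = true := by
  refine ⟨fun hx => ?_, fun h => mem_W_iff_exists_stageW.2 ⟨m, h⟩⟩
  obtain ⟨s₀, hs₀⟩ := mem_W_iff_exists_stageW.1 hx
  obtain ⟨s, hs, -⟩ := Nat.rfind_min' (p := fun s => stageW x s x) hs₀
  have hxs : stageW x s x = true := by simpa using Nat.rfind_spec hs
  refine (le_total m s).elim (fun hms => absurd ?_ hfix) fun hsm => stageW_mono hsm hxs
  have hs' : (Nat.rfind fun s => Part.some (stageW x s x)) = Part.some s := Part.eq_some_iff.2 hs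
  have : phi j = phi (f j) := funext fun n => by simp [hj, hs', hm s hms]
  simp [W, this]

theorem oracleRecursiveIn_charFn_Khalt {O : ℕ →. ℕ} {f : ℕ → ℕ}
    (hf : LimitWithModulusIn O fun n => Part.some (f n)) (hfix : ∀ e, W (f e) ≠ W e) :
    OracleRecursiveIn O (charFn Khalt) := by
  obtain ⟨H, hH, M, hM, hmod⟩ := hf
  have hF : Partrec fun p : ℕ × ℕ × ℕ => (Nat.rfind fun s => Part.some (stageW p.2.1 s p.2.1)).bind
      fun s => phi ((H s p.1).getD 0) p.2.2 := by
    have hphi : Partrec₂ phi :=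
      eval_part.comp ((Primrec.ofNat Code).comp Primrec.fst).to_comp Computable.snd
    have hstage : Computable₂ fun (p : ℕ × ℕ × ℕ) s => stageW p.2.1 s p.2.1 :=
      (primrec_stageW.comp ((Primrec.fst.comp (Primrec.snd.comp Primrec.fst)).pair
        (Primrec.snd.pair (Primrec.fst.comp (Primrec.snd.comp Primrec.fst))))).to_comp
    have hguess : Computable₂ fun (p : ℕ × ℕ × ℕ) s => (H s p.1).getD 0 :=
      (Primrec.option_getD.comp (hH.comp Primrec.snd (Primrec.fst.comp Primrec.fst))
        (Primrec.const 0)).to_comp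
    exact (Partrec.rfind hstage.partrec₂).bind
      (hphi.comp hguess (Computable.snd.comp (Computable.snd.comp Computable.fst)))
  obtain ⟨i, hi, hphi⟩ := exists_computable_phi_eq_s11 (F := fun j x n =>
    (Nat.rfind fun s => Part.some (stageW x s x)).bind fun s => phi ((H s j).getD 0) n) hF
  have hχ : Computable₂ fun x m => bif stageW x m x then 1 else 0 :=
    (Primrec.cond (primrec_stageW.comp (Primrec.fst.pair (Primrec.snd.pair Primrec.fst)))
      (Primrec.const 1) (Primrec.const 0)).to_comp
  refine ((hM.precomp hi).map hχ).of_eq fun x => ?_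
  obtain ⟨m, hm, hHm⟩ := hmod (i x) _ (Part.mem_some _)
  have hK := mem_Khalt_iff_stageW (congrFun (hphi x)) (hfix (i x)) hHm
  rw [Part.eq_some_iff.2 hm]
  by_cases hx : x ∈ Khalt
  · simp [charFn, hx, hK.1 hx]
  · simp [charFn, hx, mt hK.2 hx]

theorem arslanov_completeness_criterion_general (A : Set ℕ) (hce : ∃ e : ℕ, W e = A)
    (hinc : ¬ TuringRed Khalt A)
    (f : ℕ → ℕ) (hf : FunRecIn A f) :
    ∃ e : ℕ, W (f e) = W e := by
  obtain ⟨e, rfl⟩ := hce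
  by_contra! hfix
  exact hinc <| oracleRecursiveIn_charFn_Khalt
    (OracleRecursiveIn.limitWithModulusIn hf (limitWithModulusIn_charFn_W e)) hfix

/-- Arslanov's completeness criterion. -/
theorem arslanov_completeness_criterion (A : Set ℕ) (hce : ∃ e : ℕ, W e = A)
    (hred : TuringRed A Khalt) (hinc : ¬ TuringRed Khalt A)
    (f : ℕ → ℕ) (hf : FunRecIn A f) :
    ∃ e : ℕ, W (f e) = W e :=
  arslanov_completeness_criterion_general A hce hinc f hf
end
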